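/- arXiv:2412.01988 — 5 statements merged into one kernel-verified Lean document; each statement's English description precedes it below -/
import Mathlib

section
/- Let p be an odd prime, e a positive integer, and a', b', d integers coprime to p. Then the congruence a'·x₁² + b'·x₂² ≡ d (mod p^e) has an integer solution (x₁, x₂). -/
/-!
Modulo `p` the two quadratic forms `a'x₁²` and `d - b'x₂²` each take `(p + 1) / 2` values, so
their value sets meet. Since `p ∤ d`, some coordinate of such a solution is a unit mod `p`, and
the equation in that coordinate has derivative (`2a'x₁` or `2b'x₂`) prime to `p` as `p` is odd, so Hensel's
lemma lifts the solution to every power of `p`.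
-/

open Polynomial

namespace Polynomial

variable {R : Type*} [CommRing R]

theorem exists_pow_succ_dvd_eval_of_isCoprime {p : R} {f : R[X]} {x : R} {e : ℕ} (he : 1 ≤ e)
    (hfx : p ^ e ∣ f.eval x) (hf' : IsCoprime p (f.derivative.eval x)) :
    ∃ y, p ^ (e + 1) ∣ f.eval y ∧ p ^ e ∣ y - x := by
  obtain ⟨t, ht⟩ := hfx
  obtain ⟨u, v, huv⟩ := hf'
  -- Newton's correction `x - f(x) / f'(x)`, with `v` an inverse of `f'(x)` modulo `p`.
  set s := -t * v * p ^ e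
  obtain ⟨k, hk⟩ := f.binomExpansion x s
  refine ⟨x + s, ?_, by simp [s]⟩
  have hfy : f.eval (x + s) = p ^ (e + 1) * (t * u) + k * (t * v) ^ 2 * (p ^ e) ^ 2 := by
    rw [hk, ht]
    linear_combination -(p ^ e * t) * huv
  have hsq : p ^ (e + 1) ∣ (p ^ e) ^ 2 := by
    rw [← pow_mul]
    exact pow_dvd_pow p (by omega)
  rw [hfy]
  exact dvd_add (dvd_mul_right _ _) (hsq.mul_left _)

theorem exists_pow_dvd_eval_of_isCoprime {p : R} {f : R[X]} {x : R} (hfx : p ∣ f.eval x)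
    (hf' : IsCoprime p (f.derivative.eval x)) (n : ℕ) :
    ∃ y, p ^ (n + 1) ∣ f.eval y ∧ p ∣ y - x := by
  induction n with
  | zero => exact ⟨x, by simpa using hfx, by simp⟩
  | succ n ih =>
    obtain ⟨y, hfy, hyx⟩ := ih
    obtain ⟨c, hc⟩ := hyx.trans (sub_dvd_eval_sub y x f.derivative)
    have hf'y : IsCoprime p (f.derivative.eval y) := by
      simpa [sub_eq_iff_eq_add.mp hc, add_comm] using hf'.add_mul_left_right c
    obtain ⟨z, hfz, hzy⟩ := exists_pow_succ_dvd_eval_of_isCoprime (by omega) hfy hf'y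
    refine ⟨z, hfz, ?_⟩
    rw [← sub_add_sub_cancel z y x]
    exact dvd_add ((dvd_pow_self p n.succ_ne_zero).trans hzy) hyx

end Polynomial

theorem FiniteField.exists_mul_sq_add_mul_sq_eq {R : Type*} [CommRing R] [IsDomain R] [Fintype R]
    (hR : Fintype.card R % 2 = 1) {a b : R} (ha : a ≠ 0) (hb : b ≠ 0) (d : R) :
    ∃ u v : R, a * u ^ 2 + b * v ^ 2 = d := by
  have hf : (C a * X ^ 2).degree = 2 := degree_C_mul_X_pow 2 ha
  have hg : (C b * X ^ 2 - C d).degree = 2 := by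
    have hb2 : (C b * X ^ 2).degree = 2 := degree_C_mul_X_pow 2 hb
    rw [degree_sub_eq_left_of_degree_lt (by rw [hb2]; exact degree_C_le.trans_lt (by decide)), hb2]
  obtain ⟨u, v, huv⟩ := exists_root_sum_quadratic hf hg hR
  refine ⟨u, v, ?_⟩
  simp only [eval_mul, eval_pow, eval_X, eval_C, eval_sub] at huv
  linear_combination huv

namespace Int

theorem exists_mul_sq_add_mul_sq_sub_dvd (p : ℕ) [Fact p.Prime] (hodd : Odd p) {a b : ℤ}
    (ha : ¬ (p : ℤ) ∣ a) (hb : ¬ (p : ℤ) ∣ b) (d : ℤ) :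
    ∃ u v : ℤ, (p : ℤ) ∣ a * u ^ 2 + b * v ^ 2 - d := by
  simp only [← ZMod.intCast_zmod_eq_zero_iff_dvd] at ha hb ⊢
  obtain ⟨u, v, huv⟩ := FiniteField.exists_mul_sq_add_mul_sq_eq
    (by rwa [ZMod.card, ← Nat.odd_iff]) ha hb (d : ZMod p)
  refine ⟨u.val, v.val, ?_⟩
  push_cast
  simp only [ZMod.natCast_val, ZMod.cast_id', id, huv, sub_self]

theorem exists_pow_dvd_mul_sq_add_of_not_dvd {p : ℤ} (hp : Prime p) (h2 : ¬ p ∣ 2) {a u c : ℤ}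
    (ha : ¬ p ∣ a) (hu : ¬ p ∣ u) (hau : p ∣ a * u ^ 2 + c) (n : ℕ) :
    ∃ x : ℤ, p ^ n ∣ a * x ^ 2 + c := by
  have hf' : IsCoprime p ((C a * X ^ 2 + C c).derivative.eval u) := by
    have hderiv : (C a * X ^ 2 + C c).derivative.eval u = 2 * a * u := by
      simp; ring
    rw [hderiv]
    simp only [← hp.coprime_iff_not_dvd] at h2 ha hu
    exact (h2.mul_right ha).mul_right hu
  obtain ⟨x, hx, -⟩ := exists_pow_dvd_eval_of_isCoprime (f := C a * X ^ 2 + C c)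
    (by simpa using hau) hf' n
  exact ⟨x, (pow_dvd_pow p n.le_succ).trans (by simpa using hx)⟩

end Int

theorem stmt_0_general (p : ℕ) (hp : p.Prime) (hodd : Odd p) (e : ℕ)
    (a' b' d : ℤ) (ha : ¬ (p : ℤ) ∣ a') (hb : ¬ (p : ℤ) ∣ b') (hd : ¬ (p : ℤ) ∣ d) :
    ∃ x₁ x₂ : ℤ, a' * x₁ ^ 2 + b' * x₂ ^ 2 ≡ d [ZMOD (p ^ e : ℕ)] := by
  have : Fact p.Prime := ⟨hp⟩
  have hpZ : Prime (p : ℤ) := Nat.prime_iff_prime_int.mp hp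
  have h2 : ¬ (p : ℤ) ∣ 2 := by
    rw [← hpZ.coprime_iff_not_dvd]
    exact_mod_cast Nat.isCoprime_iff_coprime.mpr (Nat.coprime_two_right.mpr hodd)
  suffices ∃ x₁ x₂ : ℤ, (p : ℤ) ^ e ∣ a' * x₁ ^ 2 + b' * x₂ ^ 2 - d from
    this.imp fun x₁ ⟨x₂, h⟩ ↦ ⟨x₂, (Int.modEq_iff_dvd.mpr (by simpa using h)).symm⟩
  obtain ⟨u, v, huv⟩ := Int.exists_mul_sq_add_mul_sq_sub_dvd p hodd ha hb d
  by_cases hu : (p : ℤ) ∣ u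
  · have hv : ¬ (p : ℤ) ∣ v := fun hv ↦ hd <| by
      simpa using ((dvd_pow hu two_ne_zero).mul_left a' |>.add
        ((dvd_pow hv two_ne_zero).mul_left b')).sub huv
    obtain ⟨x₂, hx₂⟩ := Int.exists_pow_dvd_mul_sq_add_of_not_dvd hpZ h2 hb hv
      (c := a' * u ^ 2 - d) (by convert huv using 1; ring) e
    exact ⟨u, x₂, by convert hx₂ using 1; ring⟩
  · obtain ⟨x₁, hx₁⟩ := Int.exists_pow_dvd_mul_sq_add_of_not_dvd hpZ h2 ha hu
      (c := b' * v ^ 2 - d) (by convert huv using 1; ring) e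
    exact ⟨x₁, v, by convert hx₁ using 1; ring⟩

theorem stmt_0 (p : ℕ) (hp : p.Prime) (hodd : Odd p) (e : ℕ) (he : 1 ≤ e)
    (a' b' d : ℤ) (ha : ¬ (p : ℤ) ∣ a') (hb : ¬ (p : ℤ) ∣ b') (hd : ¬ (p : ℤ) ∣ d) :
    ∃ x₁ x₂ : ℤ, a' * x₁ ^ 2 + b' * x₂ ^ 2 ≡ d [ZMOD (p ^ e : ℕ)] :=
  stmt_0_general p hp hodd e a' b' d ha hb hd
end

section
/- Let m be a positive integer and a an integer with 0 ≤ a < m that is a sum of three squares modulo m. Then there exists a squarefree integer a' ∈ [1, 5m] such that a' is a sum of three squares modulo m and a ≡ a'·d² (mod m) for some integer d. -/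
/-!
Write `a ≡ x₁² + x₂² + x₃² = 4ᵏ n` with `4 ∤ n`; since a sum of three squares divisible by `4` has
all three terms even, `n` is again a sum of three integer squares. Reduce `n` modulo `4m` to
`N ∈ [1, 4m]` and split `N = d² a'` with `a'` squarefree. As `4 ∤ N`, `d` is odd, so
`a' ≡ N d⁻²` is a sum of three squares modulo the `2`-part of `m`. Modulo the odd part of `m` every
residue is a sum of three squares (two squares suffice modulo an odd prime, Hensel lifting handles
prime powers, and the Chinese remainder theorem glues). Finally `a ≡ a' (2ᵏ d)²`.
-/

def IsSumThreeSqMod (m c : ℤ) : Prop :=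
  ∃ x₁ x₂ x₃ : ℤ, x₁ ^ 2 + x₂ ^ 2 + x₃ ^ 2 ≡ c [ZMOD m]

theorem Int.exists_modEq_and_modEq {m n : ℤ} (hmn : IsCoprime m n) (x y : ℤ) :
    ∃ z, z ≡ x [ZMOD m] ∧ z ≡ y [ZMOD n] := by
  obtain ⟨u, v, huv⟩ := hmn
  refine ⟨x * (v * n) + y * (u * m), (Int.modEq_iff_dvd.2 ⟨(y - x) * u, ?_⟩).symm,
    (Int.modEq_iff_dvd.2 ⟨(x - y) * v, ?_⟩).symm⟩
  · linear_combination x * huv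
  · linear_combination y * huv

theorem Int.modEq_mul_of_isCoprime {m n a b : ℤ} (hmn : IsCoprime m n) (hm : a ≡ b [ZMOD m])
    (hn : a ≡ b [ZMOD n]) : a ≡ b [ZMOD m * n] :=
  Int.modEq_iff_dvd.2 (hmn.mul_dvd (Int.modEq_iff_dvd.1 hm) (Int.modEq_iff_dvd.1 hn))

theorem Int.exists_sq_modEq_pow {p z w : ℤ} (hz : IsCoprime (2 * z) p) (h : z ^ 2 ≡ w [ZMOD p])
    (e : ℕ) : ∃ y, y ^ 2 ≡ w [ZMOD p ^ e] := by
  suffices lift : ∀ k : ℕ, ∃ y, y ≡ z [ZMOD p] ∧ y ^ 2 ≡ w [ZMOD p ^ (k + 1)] by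
    cases e with
    | zero => exact ⟨0, by simp [Int.modEq_one]⟩
    | succ k => obtain ⟨y, -, hy⟩ := lift k; exact ⟨y, hy⟩
  obtain ⟨u, v, huv⟩ := hz
  intro k
  induction k with
  | zero => exact ⟨z, rfl, by simpa using h⟩
  | succ k ih =>
    obtain ⟨y, hyz, hy⟩ := ih
    obtain ⟨D, hD⟩ := hy.symm.dvd
    obtain ⟨j, hj⟩ := hyz.symm.dvd
    -- Newton step `y ↦ y - D u pᵏ⁺¹`: `u` inverts `2 z ≡ 2 y` modulo `p`.
    refine ⟨y - D * u * p ^ (k + 1), (Int.modEq_iff_dvd.2 ⟨D * u * p ^ k, by ring⟩).trans hyz,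
      (Int.modEq_iff_dvd.2 ⟨D * (v - 2 * j * u) + D ^ 2 * u ^ 2 * p ^ k, ?_⟩).symm⟩
    linear_combination hD - p ^ (k + 1) * D * huv - 2 * p ^ (k + 1) * D * u * hj

namespace IsSumThreeSqMod

variable {m n c c' : ℤ}

theorem of_modEq (h : IsSumThreeSqMod m c) (hc : c ≡ c' [ZMOD m]) : IsSumThreeSqMod m c' :=
  let ⟨x₁, x₂, x₃, hx⟩ := h
  ⟨x₁, x₂, x₃, hx.trans hc⟩

theorem of_dvd (h : IsSumThreeSqMod m c) (hnm : n ∣ m) : IsSumThreeSqMod n c :=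
  let ⟨x₁, x₂, x₃, hx⟩ := h
  ⟨x₁, x₂, x₃, hx.of_dvd hnm⟩

theorem mul_sq (h : IsSumThreeSqMod m c) (s : ℤ) : IsSumThreeSqMod m (c * s ^ 2) := by
  obtain ⟨x₁, x₂, x₃, hx⟩ := h
  exact ⟨x₁ * s, x₂ * s, x₃ * s, by simpa only [mul_pow, ← add_mul] using hx.mul_right (s ^ 2)⟩

theorem of_sq_mul {d : ℤ} (hd : IsCoprime d m) (h : IsSumThreeSqMod m (d ^ 2 * c)) :
    IsSumThreeSqMod m c := by
  obtain ⟨u, v, huv⟩ := hd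
  refine (h.mul_sq u).of_modEq (Int.modEq_iff_dvd.2 ⟨c * v * (u * d + 1), ?_⟩)
  linear_combination -(u * d + 1) * c * huv

theorem mul (hmn : IsCoprime m n) (hm : IsSumThreeSqMod m c) (hn : IsSumThreeSqMod n c) :
    IsSumThreeSqMod (m * n) c := by
  obtain ⟨x₁, x₂, x₃, hx⟩ := hm
  obtain ⟨y₁, y₂, y₃, hy⟩ := hn
  obtain ⟨z₁, hz₁m, hz₁n⟩ := Int.exists_modEq_and_modEq hmn x₁ y₁
  obtain ⟨z₂, hz₂m, hz₂n⟩ := Int.exists_modEq_and_modEq hmn x₂ y₂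
  obtain ⟨z₃, hz₃m, hz₃n⟩ := Int.exists_modEq_and_modEq hmn x₃ y₃
  exact ⟨z₁, z₂, z₃, Int.modEq_mul_of_isCoprime hmn
    ((((hz₁m.pow 2).add (hz₂m.pow 2)).add (hz₃m.pow 2)).trans hx)
    ((((hz₁n.pow 2).add (hz₂n.pow 2)).add (hz₃n.pow 2)).trans hy)⟩

end IsSumThreeSqMod

theorem isSumThreeSqMod_prime_pow {p : ℕ} (hp : p.Prime) (hp2 : p ≠ 2) (e : ℕ) (c : ℤ) :
    IsSumThreeSqMod ((p : ℤ) ^ e) c := by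
  have := Fact.mk hp
  obtain ⟨a, b, -, -, hab⟩ := Nat.sq_add_sq_zmodEq p (c - 1)
  have h2 : IsCoprime (2 * 1 : ℤ) p := by
    rw [mul_one, show (2 : ℤ) = (2 : ℕ) by rfl, Nat.isCoprime_iff_coprime]
    exact (Nat.coprime_primes Nat.prime_two hp).2 hp2.symm
  have h1 : (1 : ℤ) ^ 2 ≡ c - a ^ 2 - b ^ 2 [ZMOD p] :=
    Int.modEq_iff_dvd.2 (by convert Int.modEq_iff_dvd.1 hab using 1; ring)
  obtain ⟨y, hy⟩ := Int.exists_sq_modEq_pow h2 h1 e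
  refine ⟨a, b, y, ?_⟩
  convert hy.add_left ((a : ℤ) ^ 2 + (b : ℤ) ^ 2) using 1
  ring

theorem isSumThreeSqMod_of_odd {m : ℕ} (hm : Odd m) (c : ℤ) : IsSumThreeSqMod m c := by
  induction m using Nat.recOnPosPrimePosCoprime generalizing c with
  | prime_pow p n hp hn =>
    have hp2 : p ≠ 2 := by
      rintro rfl
      exact Nat.not_even_iff_odd.2 hm ((Nat.even_pow' hn.ne').2 even_two)
    exact_mod_cast isSumThreeSqMod_prime_pow hp hp2 n c
  | zero => exact absurd hm (by decide)
  | one => exact ⟨0, 0, 0, by simp [Int.modEq_one]⟩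
  | coprime a b _ _ hab iha ihb =>
    obtain ⟨ha, hb⟩ := Nat.odd_mul.1 hm
    exact_mod_cast (iha ha c).mul (Nat.isCoprime_iff_coprime.2 hab) (ihb hb c)

theorem IsSumThreeSqMod.of_two_pow_mul_odd {e m : ℕ} (hm : Odd m) {c : ℤ}
    (h : IsSumThreeSqMod (2 ^ e) c) : IsSumThreeSqMod ((2 ^ e * m : ℕ) : ℤ) c := by
  have hcop : IsCoprime ((2 ^ e : ℕ) : ℤ) m :=
    Nat.isCoprime_iff_coprime.2 (Nat.Coprime.pow_left e (Nat.coprime_two_left.2 hm))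
  exact_mod_cast h.mul hcop (isSumThreeSqMod_of_odd hm c)

theorem Int.even_of_four_dvd_sq_add_sq_add_sq {x y z : ℤ} (h : 4 ∣ x ^ 2 + y ^ 2 + z ^ 2) :
    Even x ∧ Even y ∧ Even z := by
  have sq_mod_four (t : ℤ) : (Even t ∧ 4 ∣ t ^ 2) ∨ t ^ 2 % 4 = 1 :=
    (Int.even_or_odd t).imp (fun ht => ⟨ht, by obtain ⟨k, rfl⟩ := ht; exact ⟨k ^ 2, by ring⟩⟩)
      Int.sq_mod_four_eq_one_of_odd
  rcases sq_mod_four x with ⟨hx, hx4⟩ | hx <;> rcases sq_mod_four y with ⟨hy, hy4⟩ | hy <;>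
    rcases sq_mod_four z with ⟨hz, hz4⟩ | hz
  all_goals first | exact ⟨hx, hy, hz⟩ | omega

theorem Int.exists_sq_add_sq_add_sq_of_four_pow_mul {k : ℕ} {n x y z : ℤ}
    (h : 4 ^ k * n = x ^ 2 + y ^ 2 + z ^ 2) : ∃ x' y' z' : ℤ, n = x' ^ 2 + y' ^ 2 + z' ^ 2 := by
  induction k generalizing x y z with
  | zero => exact ⟨x, y, z, by simpa using h⟩
  | succ k ih =>
    obtain ⟨⟨x', rfl⟩, ⟨y', rfl⟩, ⟨z', rfl⟩⟩ :=
      Int.even_of_four_dvd_sq_add_sq_add_sq ⟨4 ^ k * n, by rw [← h]; ring⟩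
    exact ih (x := x') (y := y') (z := z') (mul_left_cancel₀ four_ne_zero (by linear_combination h))

theorem Int.exists_natCast_modEq {M : ℤ} (hM : 0 < M) (n : ℤ) :
    ∃ N : ℕ, 0 < N ∧ (N : ℤ) ≤ M ∧ (N : ℤ) ≡ n [ZMOD M] := by
  refine ⟨((n - 1) % M).toNat + 1, by omega, ?_, ?_⟩
  · have := Int.emod_lt_of_pos (n - 1) hM
    omega
  · have := Int.emod_nonneg (n - 1) hM.ne'
    simpa [Int.toNat_of_nonneg this] using (Int.mod_modEq (n - 1) M).add_right 1

theorem exists_squarefree_modEq_mul_sq {m : ℕ} (hm : 0 < m) {n : ℤ} (hn : IsSumThreeSqMod m n)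
    (h4 : ¬ 4 ∣ n) : ∃ a : ℤ, Squarefree a ∧ 1 ≤ a ∧ a ≤ 4 * m ∧ IsSumThreeSqMod m a ∧
      ∃ d, n ≡ a * d ^ 2 [ZMOD m] := by
  obtain ⟨N, hN0, hNm, hNn⟩ := Int.exists_natCast_modEq (M := 4 * m) (by omega) n
  obtain ⟨a, d, ha, hd, rfl, hsf⟩ := Nat.sq_mul_squarefree_of_pos hN0
  have hd_odd : Odd d := by
    refine Nat.not_even_iff_odd.1 fun ⟨k, hk⟩ => h4 ?_
    have : (4 : ℤ) ∣ ((d ^ 2 * a : ℕ) : ℤ) := ⟨k ^ 2 * a, by push_cast [hk]; ring⟩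
    exact (Int.dvd_iff_dvd_of_dvd_sub ((dvd_mul_right 4 _).trans hNn.dvd)).2 this
  refine ⟨a, Int.squarefree_natCast.2 hsf, by exact_mod_cast ha, ?_, ?_, d, ?_⟩
  · have : a ≤ d ^ 2 * a := Nat.le_mul_of_pos_left a (by positivity)
    omega
  · obtain ⟨e, m', hm', rfl⟩ := Nat.exists_eq_two_pow_mul_odd hm.ne'
    have hd2 : IsCoprime (d : ℤ) ((2 : ℤ) ^ e) := by
      exact_mod_cast Nat.isCoprime_iff_coprime.2
        (Nat.Coprime.pow_right e (Nat.coprime_two_right.2 hd_odd))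
    have h2 : ((2 : ℤ) ^ e) ∣ 4 * ((2 ^ e * m' : ℕ) : ℤ) := ⟨4 * m', by push_cast; ring⟩
    refine IsSumThreeSqMod.of_two_pow_mul_odd hm' (IsSumThreeSqMod.of_sq_mul hd2 ?_)
    exact_mod_cast (hn.of_dvd ⟨m', by push_cast; ring⟩).of_modEq (hNn.symm.of_dvd h2)
  · convert (hNn.of_dvd (dvd_mul_left _ 4)).symm using 2
    push_cast
    ring

theorem stmt_6_general (m : ℕ) (hm : 0 < m) (a : ℤ)
    (h : ∃ x₁ x₂ x₃ : ℤ, x₁ ^ 2 + x₂ ^ 2 + x₃ ^ 2 ≡ a [ZMOD m]) :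
    ∃ a' : ℤ, Squarefree a' ∧ 1 ≤ a' ∧ a' ≤ 5 * m ∧
      (∃ x₁ x₂ x₃ : ℤ, x₁ ^ 2 + x₂ ^ 2 + x₃ ^ 2 ≡ a' [ZMOD m]) ∧
      ∃ d : ℤ, a ≡ a' * d ^ 2 [ZMOD m] := by
  obtain ⟨x₁, x₂, x₃, hx⟩ := h
  rcases eq_or_ne (x₁ ^ 2 + x₂ ^ 2 + x₃ ^ 2) 0 with h0 | h0
  · exact ⟨1, squarefree_one, le_rfl, by omega, ⟨1, 0, 0, by norm_num⟩, 0,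
      by simpa [h0] using hx.symm⟩
  obtain ⟨n, hkn, h4⟩ :=
    ((Int.finiteMultiplicity_iff (a := 4)).2 ⟨by norm_num, h0⟩).exists_eq_pow_mul_and_not_dvd
  set k := multiplicity (4 : ℤ) (x₁ ^ 2 + x₂ ^ 2 + x₃ ^ 2)
  obtain ⟨y₁, y₂, y₃, hy⟩ := Int.exists_sq_add_sq_add_sq_of_four_pow_mul hkn.symm
  obtain ⟨a', hsf, ha'1, ha'm, ha', d, hd⟩ :=
    exists_squarefree_modEq_mul_sq hm ⟨y₁, y₂, y₃, by rw [hy]⟩ h4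
  refine ⟨a', hsf, ha'1, by omega, ha', 2 ^ k * d, ?_⟩
  calc a ≡ 4 ^ k * n [ZMOD m] := hkn ▸ hx.symm
    _ ≡ 4 ^ k * (a' * d ^ 2) [ZMOD m] := hd.mul_left _
    _ = a' * (2 ^ k * d) ^ 2 := by rw [show (4 : ℤ) = 2 ^ 2 by norm_num, ← pow_mul]; ring

theorem stmt_6 (m : ℕ) (hm : 0 < m) (a : ℤ) (ha0 : 0 ≤ a) (ham : a < m)
    (h : ∃ x₁ x₂ x₃ : ℤ, x₁ ^ 2 + x₂ ^ 2 + x₃ ^ 2 ≡ a [ZMOD m]) :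
    ∃ a' : ℤ, Squarefree a' ∧ 1 ≤ a' ∧ a' ≤ 5 * m ∧
      (∃ x₁ x₂ x₃ : ℤ, x₁ ^ 2 + x₂ ^ 2 + x₃ ^ 2 ≡ a' [ZMOD m]) ∧
      ∃ d : ℤ, a ≡ a' * d ^ 2 [ZMOD m] :=
  stmt_6_general m hm a h
end

section
/- Let p be an odd prime, e ≥ 1, and let x₁, x₂, x₃, x₄ be integers with at least one x_j not divisible by p, satisfying x₁² + x₂² + x₃² + x₄² ≡ a (mod p^e) for an integer a that is squarefree, where additionally e ≥ 2 if p divides a. Then there exist integers y₁, y₂, y₃, y₄ with y₁² + y₂² + y₃² + y₄² ≡ 1 (mod p^e) and x₁y₁ + x₂y₂ + x₃y₃ + x₄y₄ ≡ 0 (mod p^e). -/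
/-!
If `w, w'` are orthogonal to `x`, then so is `y = s w + t w'`, and `∑ y²` is a binary quadratic
form in `(s, t)`. When its discriminant is prime to `p`, it represents `1` over `𝔽_p` (counting
squares), and since `1` is a unit some partial derivative is nonzero there, so Hensel's lemma in
one variable lifts the solution to every `p ^ e`. If `p ∤ ∑ x²`, take `w, w'` to be `i x` and
`j x` in the quaternions (up to sign), orthogonal to each other and both of norm `∑ x²`.
Otherwise at least two coordinates of `x` are prime to `p`; after permuting they are `x₀, x₁`,
and `w = (0, -x₂, x₁, 0)`, `w' = (0, -x₃, 0, x₁)` have discriminant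
`4 x₁² (x₀² - ∑ x²) ≡ 4 x₀² x₁² (mod p)`.
-/

open Polynomial

namespace Polynomial

variable {R : Type*} [CommRing R] {p : R}

theorem exists_pow_succ_succ_dvd_eval_add (f : R[X]) {s : R} {k : ℕ}
    (hs : p ^ (k + 1) ∣ f.eval s) (hu : IsCoprime (f.derivative.eval s) p) :
    ∃ r, p ^ (k + 2) ∣ f.eval (s + p ^ (k + 1) * r) := by
  obtain ⟨q, hq⟩ := hs
  obtain ⟨u, v, huv⟩ := hu
  obtain ⟨c, hc⟩ := binomExpansion f s (p ^ (k + 1) * (-u * q))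
  exact ⟨-u * q, q * v + c * p ^ k * u ^ 2 * q ^ 2, by
    linear_combination hc + hq - p ^ (k + 1) * q * huv⟩

theorem exists_dvd_sub_and_pow_dvd_eval (f : R[X]) {s₀ : R} (h₀ : p ∣ f.eval s₀)
    (hu : IsCoprime (f.derivative.eval s₀) p) (e : ℕ) :
    ∃ s, p ∣ s - s₀ ∧ p ^ e ∣ f.eval s := by
  suffices ∀ k : ℕ, ∃ s, p ∣ s - s₀ ∧ p ^ (k + 1) ∣ f.eval s by
    obtain ⟨s, hs, hf⟩ := this e
    exact ⟨s, hs, (pow_dvd_pow p e.le_succ).trans hf⟩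
  intro k
  induction k with
  | zero => exact ⟨s₀, by simp, by simpa using h₀⟩
  | succ k ih =>
    obtain ⟨s, hs, hf⟩ := ih
    obtain ⟨z, hz⟩ := hs.trans (sub_dvd_eval_sub s s₀ f.derivative)
    have hu' : IsCoprime (f.derivative.eval s) p := by
      rw [show f.derivative.eval s = f.derivative.eval s₀ + p * z by linear_combination hz]
      exact hu.add_mul_left_left z
    obtain ⟨r, hr⟩ := exists_pow_succ_succ_dvd_eval_add f hf hu'
    refine ⟨s + p ^ (k + 1) * r, ?_, hr⟩
    rw [add_sub_right_comm]
    exact hs.add ((dvd_pow_self p k.succ_ne_zero).mul_right r)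

end Polynomial

namespace FiniteField

variable {F : Type*} [Field F] [Fintype F]

theorem exists_sq_add_mul_sq_eq (hF : ringChar F ≠ 2) {d : F} (hd : d ≠ 0) (m : F) :
    ∃ u v : F, u ^ 2 + d * v ^ 2 = m := by
  obtain ⟨u, v, h⟩ := exists_root_sum_quadratic (f := X ^ 2) (g := C d * X ^ 2 + C 0 * X + C (-m))
    (degree_X_pow 2) (degree_quadratic hd) (odd_card_of_char_ne_two hF)
  exact ⟨u, v, by simp at h; linear_combination h⟩

theorem exists_binaryForm_eq_of_ne_zero (hF : ringChar F ≠ 2) {a b c : F} (ha : a ≠ 0)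
    (hdisc : b ^ 2 - 4 * a * c ≠ 0) (m : F) :
    ∃ s t : F, a * s ^ 2 + b * s * t + c * t ^ 2 = m := by
  have h2 : (2 : F) ≠ 0 := Ring.two_ne_zero hF
  obtain ⟨u, v, huv⟩ := exists_sq_add_mul_sq_eq hF (d := 4 * a * c - b ^ 2)
    (by contrapose! hdisc; linear_combination -hdisc) (4 * a * m)
  -- completing the square: `4a(as² + bst + ct²) = (2as + bt)² + (4ac - b²)t²`
  refine ⟨(u - b * v) / (2 * a), v, ?_⟩
  apply mul_left_cancel₀ (mul_ne_zero (mul_ne_zero h2 h2) ha)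
  field_simp
  linear_combination huv

theorem exists_binaryForm_eq (hF : ringChar F ≠ 2) {a b c : F} (hdisc : b ^ 2 - 4 * a * c ≠ 0)
    (m : F) : ∃ s t : F, a * s ^ 2 + b * s * t + c * t ^ 2 = m := by
  rcases ne_or_eq a 0 with ha | rfl
  · exact exists_binaryForm_eq_of_ne_zero hF ha hdisc m
  rcases ne_or_eq c 0 with hc | rfl
  · obtain ⟨t, s, h⟩ :=
      exists_binaryForm_eq_of_ne_zero hF hc (b := b) (c := 0) (by simpa using hdisc) m
    exact ⟨s, t, by linear_combination h⟩
  have hb : b ≠ 0 := by simpa using hdisc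
  exact ⟨1, m / b, by field_simp; ring⟩

end FiniteField

theorem exists_binaryForm_pow_dvd_of_isCoprime {R : Type*} [CommRing R] {p a b c m s₀ t₀ : R}
    (h₀ : p ∣ a * s₀ ^ 2 + b * s₀ * t₀ + c * t₀ ^ 2 - m)
    (hu : IsCoprime (2 * a * s₀ + b * t₀) p) (e : ℕ) :
    ∃ s t, p ^ e ∣ a * s ^ 2 + b * s * t + c * t ^ 2 - m := by
  let f : R[X] := C a * X ^ 2 + C (b * t₀) * X + C (c * t₀ ^ 2 - m)
  have hf (s : R) : f.eval s = a * s ^ 2 + b * s * t₀ + c * t₀ ^ 2 - m := by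
    simp only [f, eval_add, eval_mul, eval_C, eval_pow, eval_X]
    ring
  have hf' : f.derivative.eval s₀ = 2 * a * s₀ + b * t₀ := by
    simp only [f, derivative_add, derivative_C, derivative_C_mul_X_pow, derivative_C_mul_X,
      eval_add, eval_C, eval_mul, eval_pow, eval_X, eval_zero]
    push_cast
    ring
  obtain ⟨s, -, hs⟩ := f.exists_dvd_sub_and_pow_dvd_eval (p := p) (by rwa [hf]) (by rwa [hf']) e
  exact ⟨s, t₀, by rwa [hf] at hs⟩

namespace Int

variable {p : ℕ}

theorem exists_binaryForm_dvd_sub (hp : p.Prime) (hp2 : p ≠ 2) {a b c : ℤ}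
    (hdisc : ¬ (p : ℤ) ∣ b ^ 2 - 4 * a * c) (m : ℤ) :
    ∃ s t : ℤ, (p : ℤ) ∣ a * s ^ 2 + b * s * t + c * t ^ 2 - m := by
  have : Fact p.Prime := ⟨hp⟩
  have hF : ringChar (ZMod p) ≠ 2 := by rwa [ZMod.ringChar_zmod_n]
  obtain ⟨s, t, hst⟩ := FiniteField.exists_binaryForm_eq hF (a := a) (b := b) (c := c)
    (by exact_mod_cast mt (ZMod.intCast_zmod_eq_zero_iff_dvd _ p).mp hdisc) m
  obtain ⟨s, rfl⟩ := ZMod.intCast_surjective s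
  obtain ⟨t, rfl⟩ := ZMod.intCast_surjective t
  exact ⟨s, t, (ZMod.intCast_zmod_eq_zero_iff_dvd _ p).mp (by push_cast; rw [hst, sub_self])⟩

theorem not_dvd_two_of_prime_of_ne_two (hp : p.Prime) (hp2 : p ≠ 2) : ¬ (p : ℤ) ∣ 2 := by
  rw [show (2 : ℤ) = (2 : ℕ) from rfl, natCast_dvd_natCast,
    Nat.prime_dvd_prime_iff_eq hp Nat.prime_two]
  exact hp2

theorem exists_binaryForm_modEq (hp : p.Prime) (hp2 : p ≠ 2) {a b c m : ℤ}
    (hdisc : ¬ (p : ℤ) ∣ b ^ 2 - 4 * a * c) (hm : ¬ (p : ℤ) ∣ m) (e : ℕ) :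
    ∃ s t : ℤ, a * s ^ 2 + b * s * t + c * t ^ 2 ≡ m [ZMOD (p : ℤ) ^ e] := by
  have hpZ : Prime (p : ℤ) := Nat.prime_iff_prime_int.mp hp
  obtain ⟨s₀, t₀, h₀⟩ := exists_binaryForm_dvd_sub hp hp2 hdisc m
  simp only [Int.modEq_comm, Int.modEq_iff_dvd]
  -- Euler's identity: if both partial derivatives vanished mod `p`, so would `2 * m`.
  have hgrad : ¬ (p : ℤ) ∣ 2 * a * s₀ + b * t₀ ∨ ¬ (p : ℤ) ∣ 2 * c * t₀ + b * s₀ := by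
    by_contra! h
    have h2m : (p : ℤ) ∣ 2 * m := by
      rw [show 2 * m = s₀ * (2 * a * s₀ + b * t₀) + t₀ * (2 * c * t₀ + b * s₀)
        - 2 * (a * s₀ ^ 2 + b * s₀ * t₀ + c * t₀ ^ 2 - m) by ring]
      exact ((h.1.mul_left s₀).add (h.2.mul_left t₀)).sub (h₀.mul_left 2)
    exact hpZ.not_dvd_mul (not_dvd_two_of_prime_of_ne_two hp hp2) hm h2m
  rcases hgrad with hu | hu
  · exact exists_binaryForm_pow_dvd_of_isCoprime h₀ (hpZ.coprime_iff_not_dvd.mpr hu).symm e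
  · obtain ⟨t, s, h⟩ := exists_binaryForm_pow_dvd_of_isCoprime (p := (p : ℤ))
      (a := c) (b := b) (c := a) (m := m) (s₀ := t₀) (t₀ := s₀) (by ring_nf at h₀ ⊢; exact h₀)
      (hpZ.coprime_iff_not_dvd.mpr hu).symm e
    exact ⟨s, t, by ring_nf at h ⊢; exact h⟩

end Int

theorem Equiv.Perm.exists_apply_eq_and_apply_eq {ι : Type*} [DecidableEq ι] {a b i j : ι}
    (hab : a ≠ b) (hij : i ≠ j) : ∃ σ : Equiv.Perm ι, σ a = i ∧ σ b = j := by
  refine ⟨swap a i * swap b (swap a i j), ?_, by simp⟩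
  rw [mul_apply, swap_apply_of_ne_of_ne hab, swap_apply_left]
  rw [Ne, eq_comm, swap_apply_eq_iff, swap_apply_left]
  exact hij.symm

theorem exists_ne_not_dvd_of_dvd_sum_sq {ι : Type*} [Fintype ι] [DecidableEq ι] {p : ℤ}
    (hp : Prime p) {x : ι → ℤ} (hS : p ∣ ∑ i, x i ^ 2) {i : ι} (hi : ¬ p ∣ x i) :
    ∃ j, j ≠ i ∧ ¬ p ∣ x j := by
  by_contra! h
  rw [← Finset.add_sum_erase _ _ (Finset.mem_univ i)] at hS
  have hrest : p ∣ ∑ j ∈ Finset.univ.erase i, x j ^ 2 :=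
    Finset.dvd_sum fun j hj => (h j (Finset.ne_of_mem_erase hj)).pow two_ne_zero
  exact hi (hp.dvd_of_dvd_pow ((dvd_add_left hrest).mp hS))

def HasNormOneOrthogonal {ι : Type*} [Fintype ι] (n : ℤ) (x : ι → ℤ) : Prop :=
  ∃ y : ι → ℤ, ∑ i, y i ^ 2 ≡ 1 [ZMOD n] ∧ ∑ i, x i * y i ≡ 0 [ZMOD n]

namespace HasNormOneOrthogonal

section

variable {ι : Type*} [Fintype ι] {n : ℤ} {x : ι → ℤ}

theorem of_comp_perm (σ : Equiv.Perm ι) (h : HasNormOneOrthogonal n (x ∘ σ)) :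
    HasNormOneOrthogonal n x := by
  obtain ⟨y, hy, hxy⟩ := h
  refine ⟨y ∘ σ.symm, ?_, ?_⟩
  · simpa only [Function.comp_apply, Equiv.sum_comp σ.symm fun i => y i ^ 2] using hy
  · simpa [← Equiv.sum_comp σ fun i => x i * y (σ.symm i)] using hxy

theorem of_pair {p : ℕ} (hp : p.Prime) (hp2 : p ≠ 2) (w w' : ι → ℤ)
    (hw : ∑ i, x i * w i = 0) (hw' : ∑ i, x i * w' i = 0)
    (hdisc : ¬ (p : ℤ) ∣ (2 * ∑ i, w i * w' i) ^ 2 - 4 * (∑ i, w i ^ 2) * ∑ i, w' i ^ 2)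
    (e : ℕ) : HasNormOneOrthogonal ((p : ℤ) ^ e) x := by
  obtain ⟨s, t, hst⟩ := Int.exists_binaryForm_modEq hp hp2 hdisc
    (Nat.prime_iff_prime_int.mp hp).not_dvd_one e
  refine ⟨fun i => s * w i + t * w' i, ?_, ?_⟩
  · convert hst using 1
    simp only [Finset.sum_mul, Finset.mul_sum, ← Finset.sum_add_distrib]
    exact Finset.sum_congr rfl fun i _ => by ring
  · have : ∑ i, x i * (s * w i + t * w' i) = s * ∑ i, x i * w i + t * ∑ i, x i * w' i := by
      simp only [Finset.mul_sum, ← Finset.sum_add_distrib]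
      exact Finset.sum_congr rfl fun i _ => by ring
    rw [this, hw, hw']
    simp

end

variable {p : ℕ} {x : Fin 4 → ℤ}

theorem of_not_dvd_sum_sq (hp : p.Prime) (hp2 : p ≠ 2) (hS : ¬ (p : ℤ) ∣ ∑ i, x i ^ 2)
    (e : ℕ) : HasNormOneOrthogonal ((p : ℤ) ^ e) x := by
  have hpZ : Prime (p : ℤ) := Nat.prime_iff_prime_int.mp hp
  refine of_pair hp hp2 ![x 1, -x 0, x 3, -x 2] ![x 2, -x 3, -x 0, x 1]
    (by simp [Fin.sum_univ_four]; ring) (by simp [Fin.sum_univ_four]; ring) ?_ e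
  rw [show (2 * ∑ i, ![x 1, -x 0, x 3, -x 2] i * ![x 2, -x 3, -x 0, x 1] i) ^ 2
      - 4 * (∑ i, ![x 1, -x 0, x 3, -x 2] i ^ 2) * ∑ i, ![x 2, -x 3, -x 0, x 1] i ^ 2
      = -(2 * ∑ i, x i ^ 2) ^ 2 by simp [Fin.sum_univ_four]; ring, dvd_neg]
  exact fun h => hpZ.not_dvd_mul (Int.not_dvd_two_of_prime_of_ne_two hp hp2) hS
    (hpZ.dvd_of_dvd_pow h)

theorem of_dvd_sum_sq (hp : p.Prime) (hp2 : p ≠ 2) (hS : (p : ℤ) ∣ ∑ i, x i ^ 2)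
    (h₀ : ¬ (p : ℤ) ∣ x 0) (h₁ : ¬ (p : ℤ) ∣ x 1) (e : ℕ) :
    HasNormOneOrthogonal ((p : ℤ) ^ e) x := by
  have hpZ : Prime (p : ℤ) := Nat.prime_iff_prime_int.mp hp
  refine of_pair hp hp2 ![0, -x 2, x 1, 0] ![0, -x 3, 0, x 1]
    (by simp [Fin.sum_univ_four]; ring) (by simp [Fin.sum_univ_four]; ring) ?_ e
  rw [show (2 * ∑ i, ![0, -x 2, x 1, 0] i * ![0, -x 3, 0, x 1] i) ^ 2
      - 4 * (∑ i, ![0, -x 2, x 1, 0] i ^ 2) * ∑ i, ![0, -x 3, 0, x 1] i ^ 2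
      = (2 * x 0 * x 1) ^ 2 - 4 * x 1 ^ 2 * ∑ i, x i ^ 2 by simp [Fin.sum_univ_four]; ring]
  intro h
  have h2 := hpZ.dvd_of_dvd_pow ((dvd_sub_left (hS.mul_left _)).mp h)
  exact hpZ.not_dvd_mul (hpZ.not_dvd_mul (Int.not_dvd_two_of_prime_of_ne_two hp hp2) h₀) h₁ h2

theorem of_exists_not_dvd (hp : p.Prime) (hp2 : p ≠ 2) (hx : ∃ i, ¬ (p : ℤ) ∣ x i) (e : ℕ) :
    HasNormOneOrthogonal ((p : ℤ) ^ e) x := by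
  by_cases hS : (p : ℤ) ∣ ∑ i, x i ^ 2
  · obtain ⟨i, hi⟩ := hx
    obtain ⟨j, hji, hj⟩ :=
      exists_ne_not_dvd_of_dvd_sum_sq (Nat.prime_iff_prime_int.mp hp) hS hi
    obtain ⟨σ, rfl, rfl⟩ :=
      Equiv.Perm.exists_apply_eq_and_apply_eq (a := 0) (b := 1) (by decide) hji.symm
    refine of_comp_perm σ (of_dvd_sum_sq hp hp2 ?_ hi hj e)
    simpa only [Function.comp_apply, Equiv.sum_comp σ fun i => x i ^ 2] using hS
  · exact of_not_dvd_sum_sq hp hp2 hS e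

end HasNormOneOrthogonal

theorem stmt_12_general (p : ℕ) (hp : p.Prime) (hodd : Odd p) (e : ℕ)
    (x₁ x₂ x₃ x₄ : ℤ)
    (hx : ¬ (p : ℤ) ∣ x₁ ∨ ¬ (p : ℤ) ∣ x₂ ∨ ¬ (p : ℤ) ∣ x₃ ∨ ¬ (p : ℤ) ∣ x₄) :
    ∃ y₁ y₂ y₃ y₄ : ℤ,
      y₁ ^ 2 + y₂ ^ 2 + y₃ ^ 2 + y₄ ^ 2 ≡ 1 [ZMOD (p ^ e : ℕ)] ∧
      x₁ * y₁ + x₂ * y₂ + x₃ * y₃ + x₄ * y₄ ≡ 0 [ZMOD (p ^ e : ℕ)] := by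
  have hp2 : p ≠ 2 := by rintro rfl; exact (Nat.not_odd_iff_even.mpr even_two) hodd
  obtain ⟨y, hy, hxy⟩ := HasNormOneOrthogonal.of_exists_not_dvd (x := ![x₁, x₂, x₃, x₄]) hp hp2
    (by rcases hx with h | h | h | h; exacts [⟨0, h⟩, ⟨1, h⟩, ⟨2, h⟩, ⟨3, h⟩]) e
  refine ⟨y 0, y 1, y 2, y 3, ?_, ?_⟩
  · simpa [Fin.sum_univ_four, ← add_assoc] using hy
  · simpa [Fin.sum_univ_four, ← add_assoc] using hxy

theorem stmt_12 (p : ℕ) (hp : p.Prime) (hodd : Odd p) (e : ℕ) (he : 1 ≤ e)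
    (a x₁ x₂ x₃ x₄ : ℤ) (hsf : Squarefree a)
    (hpa : (p : ℤ) ∣ a → 2 ≤ e)
    (hx : ¬ (p : ℤ) ∣ x₁ ∨ ¬ (p : ℤ) ∣ x₂ ∨ ¬ (p : ℤ) ∣ x₃ ∨ ¬ (p : ℤ) ∣ x₄)
    (hcong : x₁ ^ 2 + x₂ ^ 2 + x₃ ^ 2 + x₄ ^ 2 ≡ a [ZMOD (p ^ e : ℕ)]) :
    ∃ y₁ y₂ y₃ y₄ : ℤ,
      y₁ ^ 2 + y₂ ^ 2 + y₃ ^ 2 + y₄ ^ 2 ≡ 1 [ZMOD (p ^ e : ℕ)] ∧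
      x₁ * y₁ + x₂ * y₂ + x₃ * y₃ + x₄ * y₄ ≡ 0 [ZMOD (p ^ e : ℕ)] :=
  stmt_12_general p hp hodd e x₁ x₂ x₃ x₄ hx
end

section
/- Let m be a positive integer with ν₂(m) ≤ 1 (m is not divisible by 4), and let a be any integer. Then there exists an integer b with b ≡ a (mod m), 4 ∤ b, and b expressible as a sum of three squares of integers. -/
/-!
Since `2` is invertible modulo an odd `n`, every residue is a difference of two squares:
`a ≡ u² - v²` with `u ≡ (a + 1)/2` and `v ≡ (a - 1)/2`. By Dirichlet's theorem there is a prime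
`q ≡ 2n - 1 (mod 4n)`; it is `≡ 1 (mod 4)`, hence `q = s² + t²` by Fermat, and `q ≡ -1 (mod n)`.
Then `b = u² + (sv)² + (tv)² ≡ u² - v² ≡ a (mod n)`, and choosing the parities of `u` and `v`
makes `b ≡ a (mod 2)` and `b ≢ 0 (mod 4)`. As `4 ∤ m`, `m` divides `2n` for some odd `n`.
-/

theorem Int.exists_sq_add_sq_modEq {N : ℕ} {r : ℤ} (hN : N ≠ 0) (hr : IsCoprime r (4 * N))
    (hr4 : r % 4 = 1) : ∃ s t : ℤ, s ^ 2 + t ^ 2 ≡ r [ZMOD 4 * N] := by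
  obtain ⟨p, -, hp, hpr⟩ :=
    Nat.forall_exists_prime_gt_and_zmodEq 0 (q := 4 * N) (by positivity) (by exact_mod_cast hr)
  have : Fact p.Prime := ⟨hp⟩
  push_cast at hpr
  have hp4 : (p : ℤ) % 4 = 1 := by
    have := hpr.of_mul_right (N : ℤ)
    unfold Int.ModEq at this
    omega
  obtain ⟨s, t, hst⟩ := Nat.Prime.sq_add_sq (p := p) (by omega)
  exact ⟨s, t, by exact_mod_cast hst ▸ hpr⟩

theorem Int.sq_emod_four (x : ℤ) : x ^ 2 % 4 = x % 2 := by
  rcases Int.even_or_odd' x with ⟨k, rfl | rfl⟩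
  · have : (2 * k) ^ 2 = 4 * (k * k) := by ring
    omega
  · have : (2 * k + 1) ^ 2 = 4 * (k * k + k) + 1 := by ring
    omega

theorem Int.exists_modEq_and_modEq_two {n : ℕ} (hn : Odd n) (c e : ℤ) :
    ∃ x : ℤ, x ≡ c [ZMOD n] ∧ x ≡ e [ZMOD 2] := by
  obtain ⟨k, rfl⟩ := hn
  refine ⟨c + (2 * k + 1) * (e - c), ?_, ?_⟩
  · exact Int.modEq_iff_dvd.mpr ⟨-(e - c), by push_cast; ring⟩
  · exact Int.modEq_iff_dvd.mpr ⟨-(k * (e - c)), by ring⟩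

theorem Int.exists_modEq_two_mul_not_four_dvd_eq_sum_three_sq {n : ℕ} (hn : Odd n) (a : ℤ) :
    ∃ b : ℤ, b ≡ a [ZMOD 2 * n] ∧ ¬ 4 ∣ b ∧ ∃ x y z : ℤ, b = x ^ 2 + y ^ 2 + z ^ 2 := by
  obtain ⟨k, hk⟩ := hn
  have hcop : IsCoprime (2 * n - 1 : ℤ) (4 * n) := ⟨2 * n - 1, 1 - n, by ring⟩
  obtain ⟨s, t, hst⟩ := exists_sq_add_sq_modEq (by omega) hcop (by omega)
  -- `k + 1` is the inverse of `2` modulo `n`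
  obtain ⟨u, hun, hu2⟩ := exists_modEq_and_modEq_two ⟨k, hk⟩ ((k + 1) * (a + 1)) 1
  obtain ⟨v, hvn, hv2⟩ := exists_modEq_and_modEq_two ⟨k, hk⟩ ((k + 1) * (a - 1)) (a + 1)
  set Q := s ^ 2 + t ^ 2
  have hbn : u ^ 2 + Q * v ^ 2 ≡ a [ZMOD n] := by
    have hQn : Q ≡ -1 [ZMOD n] := (hst.of_mul_left 4).trans (Int.modEq_iff_dvd.mpr ⟨-2, by ring⟩)
    have h2 : (2 * (k + 1) : ZMod n) = 1 := by
      have : ((2 * k + 1 : ℕ) : ZMod n) = 0 := by rw [← hk]; exact ZMod.natCast_self n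
      push_cast at this
      linear_combination this
    rw [← ZMod.intCast_eq_intCast_iff] at hQn hun hvn ⊢
    push_cast at hQn hun hvn ⊢
    rw [hQn, hun, hvn]
    linear_combination (a * (2 * (k + 1) + 1)) * h2
  have hb4 : (u ^ 2 + Q * v ^ 2) % 4 = (1 + v ^ 2) % 4 := by
    have hQ4 : Q % 4 = 1 := by
      have := hst.of_mul_right (n : ℤ)
      unfold Int.ModEq at this
      omega
    have hu4 : u ^ 2 % 4 = 1 := by rw [Int.sq_emod_four]; exact hu2
    rw [Int.add_emod, Int.mul_emod, hQ4, hu4]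
    simp [Int.add_emod]
  have hv4 := Int.sq_emod_four v
  unfold Int.ModEq at hv2
  refine ⟨u ^ 2 + (s * v) ^ 2 + (t * v) ^ 2, ?_, ?_, u, s * v, t * v, rfl⟩
  all_goals rw [show u ^ 2 + (s * v) ^ 2 + (t * v) ^ 2 = u ^ 2 + Q * v ^ 2 by ring]
  · refine (Int.modEq_and_modEq_iff_modEq_mul ?_).mp ⟨?_, hbn⟩
    · simpa using Nat.coprime_two_left.mpr ⟨k, hk⟩
    · unfold Int.ModEq
      omega
  · omega

theorem Nat.exists_odd_dvd_two_mul {m : ℕ} (hm : ¬ 4 ∣ m) : ∃ n, Odd n ∧ m ∣ 2 * n := by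
  rcases Nat.even_or_odd m with ⟨k, rfl⟩ | hodd
  · refine ⟨k, Nat.odd_iff.mpr ?_, by rw [two_mul]⟩
    omega
  · exact ⟨m, hodd, dvd_mul_left m 2⟩

theorem stmt_18_general (m : ℕ) (h4 : ¬ 4 ∣ m) (a : ℤ) :
    ∃ b : ℤ, b ≡ a [ZMOD m] ∧ ¬ (4 : ℤ) ∣ b ∧
      ∃ x₁ x₂ x₃ : ℤ, b = x₁ ^ 2 + x₂ ^ 2 + x₃ ^ 2 := by
  obtain ⟨n, hn, hmn⟩ := Nat.exists_odd_dvd_two_mul h4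
  obtain ⟨b, hba, hb4, hsq⟩ := Int.exists_modEq_two_mul_not_four_dvd_eq_sum_three_sq hn a
  exact ⟨b, hba.of_dvd (by exact_mod_cast hmn), hb4, hsq⟩

theorem stmt_18 (m : ℕ) (hm : 0 < m) (h4 : ¬ 4 ∣ m) (a : ℤ) :
    ∃ b : ℤ, b ≡ a [ZMOD m] ∧ ¬ (4 : ℤ) ∣ b ∧
      ∃ x₁ x₂ x₃ : ℤ, b = x₁ ^ 2 + x₂ ^ 2 + x₃ ^ 2 :=
  stmt_18_general m h4 a
end

section
/- Let x₁, x₂, x₃, x₄ be integers with x₁²+x₂²+x₃²+x₄² ≡ a (mod p^e) for an odd prime p with p ∤ x₁, p ∤ x₄, p ∤ (x₂²+x₄²), and p ∤ (x₁²+x₃²). If r, s are integers satisfying x₄²(x₁²+x₃²)r² + x₁²(x₂²+x₄²)s² ≡ x₁²x₄² (mod p^e), then setting y₁ ≡ −r x₃/x₁, y₂ ≡ s, y₃ ≡ r, y₄ ≡ −s x₂/x₄ (mod p^e) yields y₁²+y₂²+y₃²+y₄² ≡ 1 (mod p^e) and x₁y₁+x₂y₂+x₃y₃+x₄y₄ ≡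 0 (mod p^e). -/
/-!
Multiplying the target `y₁² + y₂² + y₃² + y₄² = 1` by the unit `x₁²x₄²` and substituting
`x₁y₁ = -r x₃`, `x₄y₄ = -s x₂` turns it into the assumed quadratic relation in `r, s`;
orthogonality holds because the four products cancel in pairs.
-/

lemma ZMod.isUnit_intCast_of_not_dvd_pow {p : ℕ} (hp : p.Prime) (e : ℕ) {x : ℤ}
    (hx : ¬ (p : ℤ) ∣ x) : IsUnit (x : ZMod (p ^ e)) := by
  have hcop : IsCoprime x ((p : ℤ) ^ e) :=
    ((Nat.prime_iff_prime_int.mp hp).coprime_iff_not_dvd.mpr hx).symm.pow_right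
  have hcast := hcop.intCast (R := ZMod (p ^ e))
  rw [Int.cast_pow, Int.cast_natCast, ← Nat.cast_pow, ZMod.natCast_self] at hcast
  exact isCoprime_zero_right.mp hcast

section CommRing

variable {R : Type*} [CommRing R] {x₁ x₂ x₃ x₄ r s y₁ y₂ y₃ y₄ : R}

theorem sum_sq_eq_one_of_mul_eq_neg (hx₁ : IsUnit x₁) (hx₄ : IsUnit x₄)
    (hrs : x₄ ^ 2 * (x₁ ^ 2 + x₃ ^ 2) * r ^ 2 + x₁ ^ 2 * (x₂ ^ 2 + x₄ ^ 2) * s ^ 2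
      = x₁ ^ 2 * x₄ ^ 2)
    (hy₁ : x₁ * y₁ = -(r * x₃)) (hy₂ : y₂ = s) (hy₃ : y₃ = r) (hy₄ : x₄ * y₄ = -(s * x₂)) :
    y₁ ^ 2 + y₂ ^ 2 + y₃ ^ 2 + y₄ ^ 2 = 1 := by
  subst y₂ y₃
  apply ((hx₁.mul hx₄).pow 2).mul_left_cancel
  linear_combination (x₄ ^ 2 * (x₁ * y₁ - r * x₃)) * hy₁
    + (x₁ ^ 2 * (x₄ * y₄ - s * x₂)) * hy₄ + hrs

theorem inner_eq_zero_of_mul_eq_neg (hy₁ : x₁ * y₁ = -(r * x₃)) (hy₂ : y₂ = s) (hy₃ : y₃ = r)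
    (hy₄ : x₄ * y₄ = -(s * x₂)) :
    x₁ * y₁ + x₂ * y₂ + x₃ * y₃ + x₄ * y₄ = 0 := by
  linear_combination hy₁ + x₂ * hy₂ + x₃ * hy₃ + hy₄

end CommRing

theorem stmt_19_general (p : ℕ) (hp : p.Prime) (e : ℕ)
    (x₁ x₂ x₃ x₄ r s y₁ y₂ y₃ y₄ : ℤ)
    (hx1 : ¬ (p : ℤ) ∣ x₁) (hx4 : ¬ (p : ℤ) ∣ x₄)
    (hrs : x₄ ^ 2 * (x₁ ^ 2 + x₃ ^ 2) * r ^ 2 + x₁ ^ 2 * (x₂ ^ 2 + x₄ ^ 2) * s ^ 2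
      ≡ x₁ ^ 2 * x₄ ^ 2 [ZMOD (p ^ e : ℕ)])
    (hy1 : x₁ * y₁ ≡ -(r * x₃) [ZMOD (p ^ e : ℕ)])
    (hy2 : y₂ ≡ s [ZMOD (p ^ e : ℕ)])
    (hy3 : y₃ ≡ r [ZMOD (p ^ e : ℕ)])
    (hy4 : x₄ * y₄ ≡ -(s * x₂) [ZMOD (p ^ e : ℕ)]) :
    y₁ ^ 2 + y₂ ^ 2 + y₃ ^ 2 + y₄ ^ 2 ≡ 1 [ZMOD (p ^ e : ℕ)] ∧
      x₁ * y₁ + x₂ * y₂ + x₃ * y₃ + x₄ * y₄ ≡ 0 [ZMOD (p ^ e : ℕ)] := by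
  simp only [← ZMod.intCast_eq_intCast_iff] at hrs hy1 hy2 hy3 hy4 ⊢
  push_cast at hrs hy1 hy2 hy3 hy4 ⊢
  exact ⟨sum_sq_eq_one_of_mul_eq_neg (ZMod.isUnit_intCast_of_not_dvd_pow hp e hx1)
      (ZMod.isUnit_intCast_of_not_dvd_pow hp e hx4) hrs hy1 hy2 hy3 hy4,
    inner_eq_zero_of_mul_eq_neg hy1 hy2 hy3 hy4⟩

theorem stmt_19 (p : ℕ) (hp : p.Prime) (hodd : Odd p) (e : ℕ) (he : 1 ≤ e)
    (a x₁ x₂ x₃ x₄ r s y₁ y₂ y₃ y₄ : ℤ)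
    (hcong : x₁ ^ 2 + x₂ ^ 2 + x₃ ^ 2 + x₄ ^ 2 ≡ a [ZMOD (p ^ e : ℕ)])
    (hx1 : ¬ (p : ℤ) ∣ x₁) (hx4 : ¬ (p : ℤ) ∣ x₄)
    (h24 : ¬ (p : ℤ) ∣ (x₂ ^ 2 + x₄ ^ 2)) (h13 : ¬ (p : ℤ) ∣ (x₁ ^ 2 + x₃ ^ 2))
    (hrs : x₄ ^ 2 * (x₁ ^ 2 + x₃ ^ 2) * r ^ 2 + x₁ ^ 2 * (x₂ ^ 2 + x₄ ^ 2) * s ^ 2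
      ≡ x₁ ^ 2 * x₄ ^ 2 [ZMOD (p ^ e : ℕ)])
    (hy1 : x₁ * y₁ ≡ -(r * x₃) [ZMOD (p ^ e : ℕ)])
    (hy2 : y₂ ≡ s [ZMOD (p ^ e : ℕ)])
    (hy3 : y₃ ≡ r [ZMOD (p ^ e : ℕ)])
    (hy4 : x₄ * y₄ ≡ -(s * x₂) [ZMOD (p ^ e : ℕ)]) :
    y₁ ^ 2 + y₂ ^ 2 + y₃ ^ 2 + y₄ ^ 2 ≡ 1 [ZMOD (p ^ e : ℕ)] ∧
      x₁ * y₁ + x₂ * y₂ + x₃ * y₃ + x₄ * y₄ ≡ 0 [ZMOD (p ^ e : ℕ)] :=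
  stmt_19_general p hp e x₁ x₂ x₃ x₄ r s y₁ y₂ y₃ y₄ hx1 hx4 hrs hy1 hy2 hy3 hy4
end
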